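/- arXiv:2302.01294 — 3 statements merged into one kernel-verified Lean document; each statement's English description precedes it below -/
import Mathlib

section
/- Let ϑ →^d g be a linear map of finite-dimensional vector spaces, and consider the action groupoid g* ⋉ ϑ* ⇒ ϑ* with source s(g,m) = m, target t(g,m) = d^T g + m, and multiplication (h, d^T g + m)·(g,m) = (h+g, m), where d^T : g* → ϑ* is (minus) the dual of d. Fix a decomposition g = Im d ⊕ coker d. Then the space of multiplicative 1-forms on this groupoid is isomorphic to C∞(ϑ*, Im d) ⊕ C∞(ϑ*, coker d)^{g*} ⊕ C∞_mult(g* ⋉ ϑ*, ker d), where C∞(ϑ*, coker d)^{g*} consists of functions f with f(d^T g + m) = f(m), and C∞_mult(g* ⋉ ϑ*, ker d) consists of ker d-valued functions β with β(h+g, m) = β(h, d^T g + m) + β(g, m). -/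
/-!
STATEMENT 4.  Let `d : ϑ → 𝔤` be a linear map of finite-dimensional vector spaces and
consider the action groupoid `𝔤* ⋉ ϑ* ⇒ ϑ*` with source `s(g,m) = m`, target
`t(g,m) = dᵀg + m` and multiplication `(h, dᵀg+m)·(g,m) = (h+g, m)`, where
`dᵀ : 𝔤* → ϑ*` is minus the dual of `d`.  Fix a decomposition `𝔤 = Im d ⊕ coker d`
(i.e. a complement `W` of `Im d`).  Then the space of multiplicative 1-forms on this
groupoid is isomorphic to
`C∞(ϑ*, Im d) ⊕ C∞(ϑ*, coker d)^{𝔤*} ⊕ C∞_mult(𝔤* ⋉ ϑ*, ker d)`.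

Cotangent spaces of the vector space `𝔤* × ϑ*` are identified with `𝔤 ⊕ ϑ`, i.e. with
continuous linear functionals on `𝔤* × ϑ*`; a 1-form is a map
`Θ : 𝔤* × ϑ* → (𝔤* × ϑ* →L[ℝ] ℝ)`.  The tangent groupoid multiplication of the (affine)
groupoid structure gives the multiplicativity condition `IsMultOneForm` below.
-/

noncomputable section Stmt4
set_option synthInstance.maxHeartbeats 1000000
set_option linter.unusedSectionVars false
set_option maxHeartbeats 2000000


variable (V G : Type*)
  [NormedAddCommGroup V] [NormedSpace ℝ V] [FiniteDimensional ℝ V]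
  [NormedAddCommGroup G] [NormedSpace ℝ G] [FiniteDimensional ℝ G]
  (d : V →L[ℝ] G)

/-- `dᵀ : 𝔤* → ϑ*`, `(dᵀ ξ)(u) = -ξ(d u)`. -/
def dT (ξ : G →L[ℝ] ℝ) : V →L[ℝ] ℝ := -(ξ.comp d)

/-- Multiplicativity of a 1-form `Θ` on the action groupoid `𝔤* ⋉ ϑ*`:
for composable arrows `(h, dᵀg+m)` and `(g,m)` and composable tangent vectors
`(ξ, dᵀξ'+μ)` (at the first arrow) and `(ξ', μ)` (at the second arrow), whose product is
`(ξ+ξ', μ)` at `(h+g, m)`, one has `Θ(prod) = Θ(first) + Θ(second)`. -/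
def IsMultOneForm
    (Θ : ((G →L[ℝ] ℝ) × (V →L[ℝ] ℝ)) → (((G →L[ℝ] ℝ) × (V →L[ℝ] ℝ)) →L[ℝ] ℝ)) : Prop :=
  ∀ (h g ξ ξ' : G →L[ℝ] ℝ) (m μ : V →L[ℝ] ℝ),
    Θ (h + g, m) (ξ + ξ', μ)
      = Θ (h, dT V G d g + m) (ξ, dT V G d ξ' + μ) + Θ (g, m) (ξ', μ)

/-- The space of (smooth) multiplicative 1-forms on `𝔤* ⋉ ϑ*`. -/
def MultOneForms :
    Submodule ℝ (((G →L[ℝ] ℝ) × (V →L[ℝ] ℝ)) → (((G →L[ℝ] ℝ) × (V →L[ℝ] ℝ)) →L[ℝ] ℝ)) where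
  carrier := {Θ | ContDiff ℝ (⊤ : ℕ∞) Θ ∧ IsMultOneForm V G d Θ}
  zero_mem' := by
    refine ⟨contDiff_const, ?_⟩
    intro h g ξ ξ' m μ
    simp
  add_mem' := by
    rintro Θ₁ Θ₂ ⟨hs₁, hm₁⟩ ⟨hs₂, hm₂⟩
    refine ⟨hs₁.add hs₂, ?_⟩
    intro h g ξ ξ' m μ
    simp only [Pi.add_apply, ContinuousLinearMap.add_apply,
      hm₁ h g ξ ξ' m μ, hm₂ h g ξ ξ' m μ]
    ring
  smul_mem' := by
    rintro c Θ ⟨hs, hm⟩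
    refine ⟨hs.const_smul c, ?_⟩
    intro h g ξ ξ' m μ
    simp only [Pi.smul_apply, ContinuousLinearMap.smul_apply, hm h g ξ ξ' m μ,
      smul_eq_mul, mul_add]

/-- `C∞(ϑ*, Im d)`: smooth functions on `ϑ*` with values in the image of `d`. -/
def FormsIm : Submodule ℝ ((V →L[ℝ] ℝ) → G) where
  carrier := {f | ContDiff ℝ (⊤ : ℕ∞) f ∧ ∀ m, f m ∈ LinearMap.range d.toLinearMap}
  zero_mem' := ⟨contDiff_const, fun _ => Submodule.zero_mem _⟩
  add_mem' := by
    rintro f₁ f₂ ⟨hs₁, hr₁⟩ ⟨hs₂, hr₂⟩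
    exact ⟨hs₁.add hs₂, fun m => Submodule.add_mem _ (hr₁ m) (hr₂ m)⟩
  smul_mem' := by
    rintro c f ⟨hs, hr⟩
    exact ⟨hs.const_smul c, fun m => Submodule.smul_mem _ c (hr m)⟩

/-- `C∞(ϑ*, coker d)^{𝔤*}`: smooth `𝔤*`-invariant functions on `ϑ*` with values in the
chosen complement `W` of `Im d` (a model of `coker d`). -/
def FormsCoker (W : Submodule ℝ G) : Submodule ℝ ((V →L[ℝ] ℝ) → G) where
  carrier := {f | ContDiff ℝ (⊤ : ℕ∞) f ∧ (∀ m, f m ∈ W) ∧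
    ∀ (ξ : G →L[ℝ] ℝ) (m : V →L[ℝ] ℝ), f (dT V G d ξ + m) = f m}
  zero_mem' := ⟨contDiff_const, fun _ => Submodule.zero_mem _, fun _ _ => rfl⟩
  add_mem' := by
    rintro f₁ f₂ ⟨hs₁, hr₁, hi₁⟩ ⟨hs₂, hr₂, hi₂⟩
    exact ⟨hs₁.add hs₂, fun m => Submodule.add_mem _ (hr₁ m) (hr₂ m),
      fun ξ m => by simp [Pi.add_apply, hi₁ ξ m, hi₂ ξ m]⟩
  smul_mem' := by
    rintro c f ⟨hs, hr, hi⟩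
    exact ⟨hs.const_smul c, fun m => Submodule.smul_mem _ c (hr m),
      fun ξ m => by simp [Pi.smul_apply, hi ξ m]⟩

/-- `C∞_mult(𝔤* ⋉ ϑ*, ker d)`: smooth `ker d`-valued multiplicative functions on the
groupoid `𝔤* ⋉ ϑ*`. -/
def FormsKer : Submodule ℝ (((G →L[ℝ] ℝ) × (V →L[ℝ] ℝ)) → V) where
  carrier := {β | ContDiff ℝ (⊤ : ℕ∞) β ∧ (∀ p, d (β p) = 0) ∧
    ∀ (h g : G →L[ℝ] ℝ) (m : V →L[ℝ] ℝ),
      β (h + g, m) = β (h, dT V G d g + m) + β (g, m)}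
  zero_mem' := ⟨contDiff_const, fun _ => by simp, fun _ _ _ => by simp⟩
  add_mem' := by
    rintro β₁ β₂ ⟨hs₁, hk₁, hm₁⟩ ⟨hs₂, hk₂, hm₂⟩
    refine ⟨hs₁.add hs₂, fun p => by simp [hk₁ p, hk₂ p], ?_⟩
    intro h g m
    simp only [Pi.add_apply, hm₁ h g m, hm₂ h g m]
    abel
  smul_mem' := by
    rintro c β ⟨hs, hk, hm⟩
    refine ⟨hs.const_smul c, fun p => by simp [hk p], ?_⟩
    intro h g m
    simp only [Pi.smul_apply, hm h g m]
    module

-- ===== auxiliary development =====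
open Module ContinuousLinearMap

def PhiAux (E : Type*) [NormedAddCommGroup E] [NormedSpace ℝ E] [FiniteDimensional ℝ E] :
    E ≃ₗ[ℝ] ((E →L[ℝ] ℝ) →L[ℝ] ℝ) :=
  (Module.evalEquiv ℝ E).trans
    ((LinearEquiv.arrowCongr (LinearMap.toContinuousLinearMap (E := E) (F' := ℝ))
      (LinearEquiv.refl ℝ ℝ)).trans LinearMap.toContinuousLinearMap)

@[simp] lemma PhiAux_apply {E : Type*} [NormedAddCommGroup E] [NormedSpace ℝ E]
    [FiniteDimensional ℝ E] (x : E) (ξ : E →L[ℝ] ℝ) : PhiAux E x ξ = ξ x := by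
  simp [PhiAux, Module.evalEquiv, LinearEquiv.arrowCongr]

lemma eq_of_forall_dual {E : Type*} [NormedAddCommGroup E] [NormedSpace ℝ E]
    [FiniteDimensional ℝ E] {x y : E} (h : ∀ ξ : E →L[ℝ] ℝ, ξ x = ξ y) : x = y := by
  apply (PhiAux E).injective; ext ξ; simpa using h ξ

abbrev PSp := (G →L[ℝ] ℝ) × (V →L[ℝ] ℝ)

lemma dT_add (ξ ξ' : G →L[ℝ] ℝ) : dT V G d (ξ + ξ') = dT V G d ξ + dT V G d ξ' := by
  rw [dT, dT, dT, ContinuousLinearMap.add_comp, neg_add]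

lemma dT_zero : dT V G d 0 = 0 := by rw [dT, ContinuousLinearMap.zero_comp, neg_zero]

lemma dT_apply (ξ : G →L[ℝ] ℝ) (v : V) : dT V G d ξ v = -ξ (d v) := rfl

-- section of d
def tauAux : ↥(LinearMap.range d.toLinearMap) →ₗ[ℝ] V :=
  (d.toLinearMap.rangeRestrict.exists_rightInverse_of_surjective
    (LinearMap.range_rangeRestrict _)).choose

lemma d_tauAux (y : ↥(LinearMap.range d.toLinearMap)) : d (tauAux V G d y) = y := by
  have h := (d.toLinearMap.rangeRestrict.exists_rightInverse_of_surjective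
    (LinearMap.range_rangeRestrict _)).choose_spec
  have h2 : d.toLinearMap.rangeRestrict (tauAux V G d y) = y := LinearMap.congr_fun h y
  exact congrArg Subtype.val h2

variable (W : Submodule ℝ G) (hW : IsCompl (LinearMap.range d.toLinearMap) W)

def sigAux : G →ₗ[ℝ] V :=
  (tauAux V G d).comp ((LinearMap.range d.toLinearMap).projectionOnto W hW)

lemma d_sigAux_of_mem {x : G} (hx : x ∈ LinearMap.range d.toLinearMap) :
    d (sigAux V G d W hW x) = x := by
  simp only [sigAux, LinearMap.comp_apply]
  rw [Submodule.linearProjOfIsCompl_apply_left hW ⟨x, hx⟩]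
  exact d_tauAux V G d ⟨x, hx⟩

lemma sigAux_of_mem_W {x : G} (hx : x ∈ W) : sigAux V G d W hW x = 0 := by
  simp only [sigAux, LinearMap.comp_apply]
  rw [Submodule.linearProjOfIsCompl_apply_right hW ⟨x, hx⟩]
  simp

lemma sub_d_sigAux_mem_W (x : G) : x - d (sigAux V G d W hW x) ∈ W := by
  obtain ⟨u, hu, w, hw, rfl⟩ : ∃ u ∈ LinearMap.range d.toLinearMap, ∃ w ∈ W, x = u + w := by
    have : x ∈ (LinearMap.range d.toLinearMap) ⊔ W := by rw [hW.sup_eq_top]; trivial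
    obtain ⟨u, hu, w, hw, h⟩ := Submodule.mem_sup.mp this
    exact ⟨u, hu, w, hw, h.symm⟩
  have h1 : sigAux V G d W hW (u + w) = sigAux V G d W hW u := by
    rw [map_add, sigAux_of_mem_W V G d W hW hw, add_zero]
  rw [h1, d_sigAux_of_mem V G d W hW hu]
  simpa using hw

attribute [irreducible] tauAux sigAux PhiAux

-- extraction
def extrG : (PSp V G →L[ℝ] ℝ) →L[ℝ] ((G →L[ℝ] ℝ) →L[ℝ] ℝ) :=
  (compL ℝ (G →L[ℝ] ℝ) (PSp V G) ℝ).flip (inl ℝ _ _)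
def extrV : (PSp V G →L[ℝ] ℝ) →L[ℝ] ((V →L[ℝ] ℝ) →L[ℝ] ℝ) :=
  (compL ℝ (V →L[ℝ] ℝ) (PSp V G) ℝ).flip (inr ℝ _ _)

@[simp] lemma extrG_apply (T : PSp V G →L[ℝ] ℝ) (ξ : G →L[ℝ] ℝ) :
    extrG V G T ξ = T (ξ, 0) := rfl
@[simp] lemma extrV_apply (T : PSp V G →L[ℝ] ℝ) (μ : V →L[ℝ] ℝ) :
    extrV V G T μ = T (0, μ) := rfl

def aOf (Θ : PSp V G → (PSp V G →L[ℝ] ℝ)) : PSp V G → G :=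
  fun p => (PhiAux G).symm (extrG V G (Θ p))
def bOf (Θ : PSp V G → (PSp V G →L[ℝ] ℝ)) : PSp V G → V :=
  fun p => (PhiAux V).symm (extrV V G (Θ p))

lemma theta_eq (Θ : PSp V G → (PSp V G →L[ℝ] ℝ)) (p : PSp V G)
    (ξ : G →L[ℝ] ℝ) (μ : V →L[ℝ] ℝ) :
    Θ p (ξ, μ) = ξ (aOf V G Θ p) + μ (bOf V G Θ p) := by
  have h1 : ξ (aOf V G Θ p) = Θ p (ξ, 0) :=
    calc ξ (aOf V G Θ p) = PhiAux G (aOf V G Θ p) ξ := (PhiAux_apply _ _).symm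
      _ = extrG V G (Θ p) ξ := by rw [aOf, (PhiAux G).apply_symm_apply]
      _ = Θ p (ξ, 0) := rfl
  have h2 : μ (bOf V G Θ p) = Θ p (0, μ) :=
    calc μ (bOf V G Θ p) = PhiAux V (bOf V G Θ p) μ := (PhiAux_apply _ _).symm
      _ = extrV V G (Θ p) μ := by rw [bOf, (PhiAux V).apply_symm_apply]
      _ = Θ p (0, μ) := rfl
  have h3 : (ξ, μ) = ((ξ, 0) : PSp V G) + ((0, μ) : PSp V G) := by simp
  rw [h1, h2, h3, map_add]

lemma aOf_contDiff {Θ : PSp V G → (PSp V G →L[ℝ] ℝ)} (hΘ : ContDiff ℝ (⊤ : ℕ∞) Θ) :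
    ContDiff ℝ (⊤ : ℕ∞) (aOf V G Θ) := by
  have : aOf V G Θ = fun p =>
      ((LinearEquiv.toContinuousLinearEquiv (𝕜 := ℝ) (E := (G →L[ℝ] ℝ) →L[ℝ] ℝ) (F := G)
          (PhiAux G).symm :
        ((G →L[ℝ] ℝ) →L[ℝ] ℝ) →L[ℝ] G).comp (extrG V G)) (Θ p) := by
    funext p; simp [aOf]
  rw [this]
  exact (ContinuousLinearMap.contDiff _).comp hΘ

lemma bOf_contDiff {Θ : PSp V G → (PSp V G →L[ℝ] ℝ)} (hΘ : ContDiff ℝ (⊤ : ℕ∞) Θ) :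
    ContDiff ℝ (⊤ : ℕ∞) (bOf V G Θ) := by
  have : bOf V G Θ = fun p =>
      ((LinearEquiv.toContinuousLinearEquiv (𝕜 := ℝ) (E := (V →L[ℝ] ℝ) →L[ℝ] ℝ) (F := V)
          (PhiAux V).symm :
        ((V →L[ℝ] ℝ) →L[ℝ] ℝ) →L[ℝ] V).comp (extrV V G)) (Θ p) := by
    funext p; simp [bOf]
  rw [this]
  exact (ContinuousLinearMap.contDiff _).comp hΘ

lemma aOf_add (Θ₁ Θ₂ : PSp V G → (PSp V G →L[ℝ] ℝ)) :
    aOf V G (Θ₁ + Θ₂) = aOf V G Θ₁ + aOf V G Θ₂ := by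
  funext p; simp [aOf]

lemma aOf_smul (c : ℝ) (Θ : PSp V G → (PSp V G →L[ℝ] ℝ)) :
    aOf V G (c • Θ) = c • aOf V G Θ := by
  funext p; simp [aOf]

lemma bOf_add (Θ₁ Θ₂ : PSp V G → (PSp V G →L[ℝ] ℝ)) :
    bOf V G (Θ₁ + Θ₂) = bOf V G Θ₁ + bOf V G Θ₂ := by
  funext p; simp [bOf]

lemma bOf_smul (c : ℝ) (Θ : PSp V G → (PSp V G →L[ℝ] ℝ)) :
    bOf V G (c • Θ) = c • bOf V G Θ := by
  funext p; simp [bOf]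

-- pairing
def pairLM : (G × V) →ₗ[ℝ] (PSp V G →L[ℝ] ℝ) where
  toFun xy := (PhiAux G xy.1).comp (fst ℝ _ _) + (PhiAux V xy.2).comp (snd ℝ _ _)
  map_add' x y := ContinuousLinearMap.ext fun q => by simp; ring
  map_smul' c x := ContinuousLinearMap.ext fun q => by simp

def pairGV : (G × V) →L[ℝ] (PSp V G →L[ℝ] ℝ) :=
  LinearMap.toContinuousLinearMap (E := G × V) (F' := PSp V G →L[ℝ] ℝ) (pairLM V G)

@[simp] lemma pairGV_apply (x : G) (y : V) (ξ : G →L[ℝ] ℝ) (μ : V →L[ℝ] ℝ) :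
    pairGV V G (x, y) (ξ, μ) = ξ x + μ y := by
  simp [pairGV, pairLM]

-- dT as CLM, and the target map
def dTL : (G →L[ℝ] ℝ) →L[ℝ] (V →L[ℝ] ℝ) := -((compL ℝ V G ℝ).flip d)

lemma dTL_apply (ξ : G →L[ℝ] ℝ) : dTL V G d ξ = dT V G d ξ := rfl

def tmapL : PSp V G →L[ℝ] (V →L[ℝ] ℝ) :=
  (dTL V G d).comp (fst ℝ _ _) + snd ℝ _ _

lemma tmapL_apply (p : PSp V G) : tmapL V G d p = dT V G d p.1 + p.2 := rfl

def mkTheta (A : (V →L[ℝ] ℝ) → G) (β : PSp V G → V) (σ : G →ₗ[ℝ] V) :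
    PSp V G → (PSp V G →L[ℝ] ℝ) :=
  fun p => pairGV V G (A (dT V G d p.1 + p.2),
    σ (A p.2 - A (dT V G d p.1 + p.2)) + β p)

lemma mkTheta_apply (A : (V →L[ℝ] ℝ) → G) (β : PSp V G → V) (σ : G →ₗ[ℝ] V)
    (g : G →L[ℝ] ℝ) (m : V →L[ℝ] ℝ) (ξ : G →L[ℝ] ℝ) (μ : V →L[ℝ] ℝ) :
    mkTheta V G d A β σ (g, m) (ξ, μ)
      = ξ (A (dT V G d g + m)) + μ (σ (A m - A (dT V G d g + m)) + β (g, m)) := by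
  simp [mkTheta]

lemma mkTheta_contDiff {A : (V →L[ℝ] ℝ) → G} {β : PSp V G → V} (σ : G →ₗ[ℝ] V)
    (hA : ContDiff ℝ (⊤ : ℕ∞) A) (hβ : ContDiff ℝ (⊤ : ℕ∞) β) :
    ContDiff ℝ (⊤ : ℕ∞) (mkTheta V G d A β σ) := by
  have hσ : ContDiff ℝ (⊤ : ℕ∞) (⇑(LinearMap.toContinuousLinearMap σ)) :=
    ContinuousLinearMap.contDiff _
  have htm : ContDiff ℝ (⊤ : ℕ∞) (fun p : PSp V G => A (dT V G d p.1 + p.2)) := by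
    have : (fun p : PSp V G => A (dT V G d p.1 + p.2)) = A ∘ (tmapL V G d) := rfl
    rw [this]
    exact hA.comp (tmapL V G d).contDiff
  have hsnd : ContDiff ℝ (⊤ : ℕ∞) (fun p : PSp V G => A p.2) :=
    hA.comp (snd ℝ (G →L[ℝ] ℝ) (V →L[ℝ] ℝ)).contDiff
  have h2 : ContDiff ℝ (⊤ : ℕ∞) (fun p : PSp V G =>
      σ (A p.2 - A (dT V G d p.1 + p.2)) + β p) := by
    have : (fun p : PSp V G => σ (A p.2 - A (dT V G d p.1 + p.2))) =
        (fun p : PSp V G => (LinearMap.toContinuousLinearMap σ)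
          (A p.2 - A (dT V G d p.1 + p.2))) := rfl
    refine ContDiff.add ?_ hβ
    rw [this]
    exact hσ.comp (hsnd.sub htm)
  have : mkTheta V G d A β σ = fun p =>
      (pairGV V G) ((A (dT V G d p.1 + p.2),
        σ (A p.2 - A (dT V G d p.1 + p.2)) + β p)) := rfl
  rw [this]
  have hp : ContDiff ℝ (⊤ : ℕ∞) (fun p : PSp V G => ((A (dT V G d p.1 + p.2),
      σ (A p.2 - A (dT V G d p.1 + p.2)) + β p) : G × V)) := htm.prodMk h2
  exact ContDiff.comp (by apply ContinuousLinearMap.contDiff : ContDiff ℝ (⊤ : ℕ∞) (pairGV V G)) hp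

lemma mkTheta_mult {A : (V →L[ℝ] ℝ) → G} {β : PSp V G → V} (σ : G →ₗ[ℝ] V)
    (hds : ∀ (ξ : G →L[ℝ] ℝ) (m : V →L[ℝ] ℝ),
      d (σ (A m - A (dT V G d ξ + m))) = A m - A (dT V G d ξ + m))
    (hβ0 : ∀ p, d (β p) = 0)
    (hβm : ∀ (h g : G →L[ℝ] ℝ) (m : V →L[ℝ] ℝ),
      β (h + g, m) = β (h, dT V G d g + m) + β (g, m)) :
    IsMultOneForm V G d (mkTheta V G d A β σ) := by
  intro h g ξ ξ' m μ
  have e1 : dT V G d (h + g) + m = dT V G d h + (dT V G d g + m) := by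
    rw [dT_add, add_assoc]
  rw [mkTheta_apply, mkTheta_apply, mkTheta_apply, e1]
  set X := A (dT V G d h + (dT V G d g + m)) with hX
  set Y := A (dT V G d g + m) with hY
  set Z := A m with hZ
  -- expand the (dT ξ' + μ) application
  have hdw : d (σ (Y - X) + β (h, dT V G d g + m)) = Y - X := by
    rw [map_add, hβ0, add_zero]
    exact hds h (dT V G d g + m)
  have hdt : (dT V G d ξ' + μ) (σ (Y - X) + β (h, dT V G d g + m))
      = -ξ' (Y - X) + μ (σ (Y - X) + β (h, dT V G d g + m)) := by
    rw [ContinuousLinearMap.add_apply]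
    congr 1
    rw [dT]
    rw [ContinuousLinearMap.neg_apply, ContinuousLinearMap.comp_apply, hdw]
  rw [hdt]
  have hσsplit : σ (Z - X) = σ (Z - Y) + σ (Y - X) := by
    rw [← map_add]; congr 1; abel
  rw [hσsplit, hβm h g m]
  simp only [ContinuousLinearMap.add_apply, map_add, map_sub]
  ring

section FromMult
variable {Θ : PSp V G → (PSp V G →L[ℝ] ℝ)} (hm : IsMultOneForm V G d Θ)
include hm

lemma aOf_target (g : G →L[ℝ] ℝ) (m : V →L[ℝ] ℝ) :
    aOf V G Θ (g, m) = aOf V G Θ (0, dT V G d g + m) := by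
  apply eq_of_forall_dual
  intro ξ
  have h := hm 0 g ξ 0 m 0
  rw [theta_eq, theta_eq, theta_eq] at h
  simpa [dT_zero V G d] using h

lemma d_bOf (g : G →L[ℝ] ℝ) (m : V →L[ℝ] ℝ) :
    d (bOf V G Θ (g, m)) = aOf V G Θ (0, m) - aOf V G Θ (g, m) := by
  apply eq_of_forall_dual
  intro ξ'
  have h := hm g 0 0 ξ' m 0
  rw [theta_eq, theta_eq, theta_eq] at h
  simp only [zero_add, add_zero, ContinuousLinearMap.zero_apply,
    ContinuousLinearMap.add_apply, dT_zero V G d] at h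
  have hdt : dT V G d ξ' (bOf V G Θ (g, m))
      = -ξ' (d (bOf V G Θ (g, m))) := rfl
  rw [hdt] at h
  rw [map_sub]
  linarith

lemma bOf_mult (h g : G →L[ℝ] ℝ) (m : V →L[ℝ] ℝ) :
    bOf V G Θ (h + g, m) = bOf V G Θ (h, dT V G d g + m) + bOf V G Θ (g, m) := by
  apply eq_of_forall_dual
  intro μ
  have hh := hm h g 0 0 m μ
  rw [theta_eq, theta_eq, theta_eq] at hh
  simp only [add_zero, zero_add, ContinuousLinearMap.zero_apply, dT_zero V G d] at hh
  rw [map_add]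
  linarith

end FromMult

def Afun (Θ : PSp V G → (PSp V G →L[ℝ] ℝ)) : (V →L[ℝ] ℝ) → G :=
  fun m => aOf V G Θ (0, m)

lemma Afun_contDiff {Θ : PSp V G → (PSp V G →L[ℝ] ℝ)} (hs : ContDiff ℝ (⊤ : ℕ∞) Θ) :
    ContDiff ℝ (⊤ : ℕ∞) (Afun V G Θ) := by
  have : Afun V G Θ = (aOf V G Θ) ∘ (inr ℝ (G →L[ℝ] ℝ) (V →L[ℝ] ℝ)) := rfl
  rw [this]
  exact (aOf_contDiff V G hs).comp (inr ℝ (G →L[ℝ] ℝ) (V →L[ℝ] ℝ)).contDiff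

lemma Afun_add' (Θ₁ Θ₂ : PSp V G → (PSp V G →L[ℝ] ℝ)) (m : V →L[ℝ] ℝ) :
    Afun V G (Θ₁ + Θ₂) m = Afun V G Θ₁ m + Afun V G Θ₂ m := by
  rw [Afun, aOf_add]; rfl

lemma Afun_smul' (c : ℝ) (Θ : PSp V G → (PSp V G →L[ℝ] ℝ)) (m : V →L[ℝ] ℝ) :
    Afun V G (c • Θ) m = c • Afun V G Θ m := by
  rw [Afun, aOf_smul]; rfl

lemma bOf_add' (Θ₁ Θ₂ : PSp V G → (PSp V G →L[ℝ] ℝ)) (p : PSp V G) :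
    bOf V G (Θ₁ + Θ₂) p = bOf V G Θ₁ p + bOf V G Θ₂ p := by
  rw [bOf_add]; rfl

lemma bOf_smul' (c : ℝ) (Θ : PSp V G → (PSp V G →L[ℝ] ℝ)) (p : PSp V G) :
    bOf V G (c • Θ) p = c • bOf V G Θ p := by
  rw [bOf_smul]; rfl

section FromMult2
variable {Θ : PSp V G → (PSp V G →L[ℝ] ℝ)} (hm : IsMultOneForm V G d Θ)
include hm

lemma aOf_eq_Afun (g : G →L[ℝ] ℝ) (m : V →L[ℝ] ℝ) :
    aOf V G Θ (g, m) = Afun V G Θ (dT V G d g + m) :=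
  aOf_target V G d hm g m

lemma d_bOf' (g : G →L[ℝ] ℝ) (m : V →L[ℝ] ℝ) :
    d (bOf V G Θ (g, m)) = Afun V G Θ m - Afun V G Θ (dT V G d g + m) := by
  rw [d_bOf V G d hm g m, ← aOf_eq_Afun V G d hm]
  rfl

lemma Adiff_mem (ξ : G →L[ℝ] ℝ) (m : V →L[ℝ] ℝ) :
    Afun V G Θ m - Afun V G Θ (dT V G d ξ + m) ∈ LinearMap.range d.toLinearMap :=
  ⟨bOf V G Θ (ξ, m), d_bOf' V G d hm ξ m⟩

end FromMult2

-- round-trip identities for mkTheta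
lemma aOf_mkTheta (A : (V →L[ℝ] ℝ) → G) (β : PSp V G → V) (σ : G →ₗ[ℝ] V)
    (g : G →L[ℝ] ℝ) (m : V →L[ℝ] ℝ) :
    aOf V G (mkTheta V G d A β σ) (g, m) = A (dT V G d g + m) := by
  apply eq_of_forall_dual
  intro ξ
  have h1 := theta_eq V G (mkTheta V G d A β σ) (g, m) ξ 0
  have h2 := mkTheta_apply V G d A β σ g m ξ 0
  rw [h1] at h2
  simpa using h2

lemma bOf_mkTheta (A : (V →L[ℝ] ℝ) → G) (β : PSp V G → V) (σ : G →ₗ[ℝ] V)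
    (g : G →L[ℝ] ℝ) (m : V →L[ℝ] ℝ) :
    bOf V G (mkTheta V G d A β σ) (g, m)
      = σ (A m - A (dT V G d g + m)) + β (g, m) := by
  apply eq_of_forall_dual
  intro μ
  have h1 := theta_eq V G (mkTheta V G d A β σ) (g, m) 0 μ
  have h2 := mkTheta_apply V G d A β σ g m 0 μ
  rw [h1] at h2
  simpa using h2
section Main
variable (W : Submodule ℝ G) (hW : IsCompl (LinearMap.range d.toLinearMap) W)

def fwdIm (Θ : MultOneForms V G d) : FormsIm V G d :=
  ⟨fun m => d (sigAux V G d W hW (Afun V G Θ.1 m)), by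
    constructor
    · have : (fun m => d (sigAux V G d W hW (Afun V G Θ.1 m)))
          = fun m => (d.comp (LinearMap.toContinuousLinearMap (sigAux V G d W hW)))
              (Afun V G Θ.1 m) := rfl
      rw [this]
      exact ContDiff.comp (f := Afun V G Θ.1)
        (ContinuousLinearMap.contDiff
          (d.comp (LinearMap.toContinuousLinearMap (sigAux V G d W hW))))
        (Afun_contDiff V G Θ.2.1)
    · intro m
      exact ⟨sigAux V G d W hW (Afun V G Θ.1 m), rfl⟩⟩

set_option maxHeartbeats 1000000 in
def fwdCoker (Θ : MultOneForms V G d) : FormsCoker V G d W :=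
  ⟨fun m => Afun V G Θ.1 m - d (sigAux V G d W hW (Afun V G Θ.1 m)), by
    refine ⟨?_, fun m => sub_d_sigAux_mem_W V G d W hW _, ?_⟩
    · have h2 : (fun m => d (sigAux V G d W hW (Afun V G Θ.1 m)))
          = fun m => (d.comp (LinearMap.toContinuousLinearMap (sigAux V G d W hW)))
              (Afun V G Θ.1 m) := rfl
      refine (Afun_contDiff V G Θ.2.1).sub ?_
      rw [h2]
      exact ContDiff.comp (f := Afun V G Θ.1)
        (ContinuousLinearMap.contDiff
          (d.comp (LinearMap.toContinuousLinearMap (sigAux V G d W hW))))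
        (Afun_contDiff V G Θ.2.1)
    · intro ξ m
      set A := Afun V G Θ.1 with hA
      set σ := sigAux V G d W hW with hσ
      have key : d (σ (A m - A (dT V G d ξ + m))) = A m - A (dT V G d ξ + m) :=
        d_sigAux_of_mem V G d W hW (Adiff_mem V G d Θ.2.2 ξ m)
      have h0 : A (dT V G d ξ + m) - d (σ (A (dT V G d ξ + m))) - (A m - d (σ (A m)))
          = d (σ (A m - A (dT V G d ξ + m))) - (A m - A (dT V G d ξ + m)) := by
        rw [map_sub σ, map_sub d]
        abel
      rw [key, sub_self] at h0
      exact sub_eq_zero.mp h0⟩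

set_option maxHeartbeats 1000000 in
def fwdKer (Θ : MultOneForms V G d) : FormsKer V G d :=
  ⟨fun p => bOf V G Θ.1 p
      - sigAux V G d W hW (Afun V G Θ.1 p.2 - Afun V G Θ.1 (dT V G d p.1 + p.2)), by
    set A := Afun V G Θ.1 with hA
    set σ := sigAux V G d W hW with hσ
    refine ⟨?_, ?_, ?_⟩
    · have h2 : (fun p : PSp V G => σ (A p.2 - A (dT V G d p.1 + p.2)))
          = fun p : PSp V G => (LinearMap.toContinuousLinearMap σ)
              ((A ∘ (snd ℝ (G →L[ℝ] ℝ) (V →L[ℝ] ℝ))) p - (A ∘ (tmapL V G d)) p) := rfl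
      refine (bOf_contDiff V G Θ.2.1).sub ?_
      rw [h2]
      have hs1 : ContDiff ℝ (⊤ : ℕ∞) (A ∘ (snd ℝ (G →L[ℝ] ℝ) (V →L[ℝ] ℝ))) :=
        (Afun_contDiff V G Θ.2.1).comp
          (ContinuousLinearMap.contDiff (snd ℝ (G →L[ℝ] ℝ) (V →L[ℝ] ℝ)))
      have hs2 : ContDiff ℝ (⊤ : ℕ∞) (A ∘ (tmapL V G d)) :=
        (Afun_contDiff V G Θ.2.1).comp (ContinuousLinearMap.contDiff (tmapL V G d))
      have hs3 : ContDiff ℝ (⊤ : ℕ∞) (fun p : PSp V G =>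
          (A ∘ (snd ℝ (G →L[ℝ] ℝ) (V →L[ℝ] ℝ))) p - (A ∘ (tmapL V G d)) p) := hs1.sub hs2
      exact ContDiff.comp (f := fun p : PSp V G =>
          (A ∘ (snd ℝ (G →L[ℝ] ℝ) (V →L[ℝ] ℝ))) p - (A ∘ (tmapL V G d)) p)
        (ContinuousLinearMap.contDiff (LinearMap.toContinuousLinearMap σ)) hs3
    · rintro ⟨g, m⟩
      have key : d (σ (A m - A (dT V G d g + m))) = A m - A (dT V G d g + m) :=
        d_sigAux_of_mem V G d W hW (Adiff_mem V G d Θ.2.2 g m)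
      show d (bOf V G Θ.1 (g, m) - σ (A m - A (dT V G d g + m))) = 0
      rw [map_sub d, key, d_bOf' V G d Θ.2.2, sub_self]
    · intro h g m
      have e1 : dT V G d (h + g) + m = dT V G d h + (dT V G d g + m) := by
        rw [dT_add, add_assoc]
      show bOf V G Θ.1 (h + g, m) - σ (A m - A (dT V G d (h + g) + m))
          = (bOf V G Θ.1 (h, dT V G d g + m)
              - σ (A (dT V G d g + m) - A (dT V G d h + (dT V G d g + m))))
            + (bOf V G Θ.1 (g, m) - σ (A m - A (dT V G d g + m)))
      rw [e1, bOf_mult V G d Θ.2.2 h g m, map_sub σ, map_sub σ, map_sub σ]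
      abel⟩

set_option maxHeartbeats 1000000 in
def bwd (t : FormsIm V G d × FormsCoker V G d W × FormsKer V G d) :
    MultOneForms V G d :=
  ⟨mkTheta V G d (fun m => t.1.1 m + t.2.1.1 m) t.2.2.1 (sigAux V G d W hW), by
    constructor
    · exact mkTheta_contDiff V G d _ (t.1.2.1.add t.2.1.2.1) t.2.2.2.1
    · refine mkTheta_mult V G d _ ?_ t.2.2.2.2.1 t.2.2.2.2.2
      intro ξ m
      have hinv := t.2.1.2.2.2 ξ m
      have hx : (t.1.1 m + t.2.1.1 m) - (t.1.1 (dT V G d ξ + m) + t.2.1.1 (dT V G d ξ + m))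
          = t.1.1 m - t.1.1 (dT V G d ξ + m) := by
        rw [hinv]; abel
      rw [hx]
      exact d_sigAux_of_mem V G d W hW
        (Submodule.sub_mem _ (t.1.2.2 m) (t.1.2.2 (dT V G d ξ + m)))⟩

end Main

/-- The classification of multiplicative 1-forms on the linear action groupoid
`𝔤* ⋉ ϑ* ⇒ ϑ*`:
`Ω¹_mult(𝔤* ⋉ ϑ*) ≅ C∞(ϑ*, Im d) ⊕ C∞(ϑ*, coker d)^{𝔤*} ⊕ C∞_mult(𝔤* ⋉ ϑ*, ker d)`. -/
theorem mult_one_forms_linear_action_groupoid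
    (W : Submodule ℝ G) (hW : IsCompl (LinearMap.range d.toLinearMap) W) :
    Nonempty ((MultOneForms V G d) ≃ₗ[ℝ]
      (FormsIm V G d × FormsCoker V G d W × FormsKer V G d)) := by
  refine ⟨{ toFun := fun Θ => (fwdIm V G d W hW Θ, fwdCoker V G d W hW Θ, fwdKer V G d W hW Θ),
            invFun := bwd V G d W hW,
            map_add' := ?_, map_smul' := ?_, left_inv := ?_, right_inv := ?_ }⟩
  · intro Θ₁ Θ₂
    have hco : ((Θ₁ + Θ₂ : MultOneForms V G d) : PSp V G → (PSp V G →L[ℝ] ℝ))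
        = (Θ₁ : PSp V G → (PSp V G →L[ℝ] ℝ)) + (Θ₂ : PSp V G → (PSp V G →L[ℝ] ℝ)) := rfl
    refine Prod.ext ?_ (Prod.ext ?_ ?_)
    · apply Subtype.ext; funext x
      simp only [fwdIm, hco, Afun_add', map_add, Prod.fst_add, Submodule.coe_add,
        Pi.add_apply]
    · apply Subtype.ext; funext x
      simp only [fwdCoker, hco, Afun_add', map_add, Prod.fst_add, Prod.snd_add,
        Submodule.coe_add, Pi.add_apply]
      abel
    · apply Subtype.ext; funext x
      show bOf V G ((Θ₁ + Θ₂ : MultOneForms V G d) : PSp V G → (PSp V G →L[ℝ] ℝ)) x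
          - sigAux V G d W hW
            (Afun V G ((Θ₁ + Θ₂ : MultOneForms V G d) : PSp V G → (PSp V G →L[ℝ] ℝ)) x.2
              - Afun V G ((Θ₁ + Θ₂ : MultOneForms V G d) : PSp V G → (PSp V G →L[ℝ] ℝ))
                (dT V G d x.1 + x.2))
          = (bOf V G Θ₁.1 x - sigAux V G d W hW
              (Afun V G Θ₁.1 x.2 - Afun V G Θ₁.1 (dT V G d x.1 + x.2)))
            + (bOf V G Θ₂.1 x - sigAux V G d W hW
              (Afun V G Θ₂.1 x.2 - Afun V G Θ₂.1 (dT V G d x.1 + x.2)))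
      rw [hco, bOf_add', Afun_add', Afun_add']
      have hsplit : (Afun V G Θ₁.1 x.2 + Afun V G Θ₂.1 x.2)
          - (Afun V G Θ₁.1 (dT V G d x.1 + x.2) + Afun V G Θ₂.1 (dT V G d x.1 + x.2))
          = (Afun V G Θ₁.1 x.2 - Afun V G Θ₁.1 (dT V G d x.1 + x.2))
            + (Afun V G Θ₂.1 x.2 - Afun V G Θ₂.1 (dT V G d x.1 + x.2)) := by abel
      rw [hsplit, map_add (sigAux V G d W hW)]
      abel
  · intro c Θ
    have hco : ((c • Θ : MultOneForms V G d) : PSp V G → (PSp V G →L[ℝ] ℝ))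
        = c • (Θ : PSp V G → (PSp V G →L[ℝ] ℝ)) := rfl
    refine Prod.ext ?_ (Prod.ext ?_ ?_)
    · apply Subtype.ext; funext x
      simp only [fwdIm, hco, Afun_smul', map_smul, RingHom.id_apply, Prod.smul_fst,
        SetLike.val_smul, Pi.smul_apply]
    · apply Subtype.ext; funext x
      simp only [fwdCoker, hco, Afun_smul', map_smul, RingHom.id_apply, Prod.smul_fst,
        Prod.smul_snd, SetLike.val_smul, Pi.smul_apply, smul_sub]
    · apply Subtype.ext; funext x
      show bOf V G ((c • Θ : MultOneForms V G d) : PSp V G → (PSp V G →L[ℝ] ℝ)) x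
          - sigAux V G d W hW
            (Afun V G ((c • Θ : MultOneForms V G d) : PSp V G → (PSp V G →L[ℝ] ℝ)) x.2
              - Afun V G ((c • Θ : MultOneForms V G d) : PSp V G → (PSp V G →L[ℝ] ℝ))
                (dT V G d x.1 + x.2))
          = c • (bOf V G Θ.1 x - sigAux V G d W hW
              (Afun V G Θ.1 x.2 - Afun V G Θ.1 (dT V G d x.1 + x.2)))
      rw [hco, bOf_smul', Afun_smul', Afun_smul', ← smul_sub, map_smul, ← smul_sub]
  · intro Θ
    apply Subtype.ext
    show mkTheta V G d
        (fun m => (fwdIm V G d W hW Θ).1 m + (fwdCoker V G d W hW Θ).1 m)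
        (fwdKer V G d W hW Θ).1 (sigAux V G d W hW) = Θ.1
    have hA'' : (fun m => (fwdIm V G d W hW Θ).1 m + (fwdCoker V G d W hW Θ).1 m)
        = Afun V G Θ.1 := by
      funext m
      show d (sigAux V G d W hW (Afun V G Θ.1 m))
          + (Afun V G Θ.1 m - d (sigAux V G d W hW (Afun V G Θ.1 m))) = Afun V G Θ.1 m
      exact add_sub_cancel _ _
    rw [hA'']
    funext p
    obtain ⟨g, m⟩ := p
    apply ContinuousLinearMap.ext
    rintro ⟨ξ, μ⟩
    rw [mkTheta_apply, theta_eq V G Θ.1 (g, m) ξ μ, aOf_eq_Afun V G d Θ.2.2 g m]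
    congr 1
    congr 1
    show sigAux V G d W hW (Afun V G Θ.1 m - Afun V G Θ.1 (dT V G d g + m))
        + (bOf V G Θ.1 (g, m)
          - sigAux V G d W hW (Afun V G Θ.1 m - Afun V G Θ.1 (dT V G d g + m)))
        = bOf V G Θ.1 (g, m)
    exact add_sub_cancel _ _
  · rintro ⟨⟨fim, hfim⟩, ⟨fW, hfW⟩, ⟨β, hβ⟩⟩
    have hAfun : Afun V G ((bwd V G d W hW (⟨fim, hfim⟩, ⟨fW, hfW⟩, ⟨β, hβ⟩)).1)
        = fun m => fim m + fW m := by
      funext m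
      show aOf V G (mkTheta V G d (fun m => fim m + fW m) β (sigAux V G d W hW)) (0, m)
          = fim m + fW m
      rw [aOf_mkTheta, dT_zero, zero_add]
    have hdσA : ∀ m, d (sigAux V G d W hW (fim m + fW m)) = fim m := by
      intro m
      rw [map_add (sigAux V G d W hW), map_add d,
        d_sigAux_of_mem V G d W hW (hfim.2 m),
        sigAux_of_mem_W V G d W hW (hfW.2.1 m), map_zero, add_zero]
    refine Prod.ext ?_ (Prod.ext ?_ ?_)
    · apply Subtype.ext
      funext m
      show d (sigAux V G d W hW (Afun V G _ m)) = fim m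
      rw [hAfun, hdσA]
    · apply Subtype.ext
      funext m
      show Afun V G _ m - d (sigAux V G d W hW (Afun V G _ m)) = fW m
      rw [hAfun, hdσA]
      exact add_sub_cancel_left _ _
    · apply Subtype.ext
      funext p
      obtain ⟨g, m⟩ := p
      show bOf V G (mkTheta V G d (fun m => fim m + fW m) β (sigAux V G d W hW)) (g, m)
          - sigAux V G d W hW (Afun V G _ m - Afun V G _ (dT V G d g + m)) = β (g, m)
      rw [hAfun, bOf_mkTheta]
      exact add_sub_cancel_left _ _

end Stmt4
end

section
/- Let G be a Lie group with Lie algebra 𝔩 acting on M via σ, with action groupoid G ⋉ M ⇒ M. A 1-form Θ on G × M, with components Θ^G : G × M → T*G and Θ^M : G × M → T*M, is multiplicative if and only if there exists a smooth map μ : M → 𝔩* such that for all g,h ∈ G, m ∈ M: (1) Ad_h* μ_{hm} - μ_m = ρ* Θ^M_{(h,m)}, where ρ(x)|_m = (σ_m)_{*e}(x); (2) Θ^G_{(g,m)} = R_{g⁻¹}* μ_{gm}; (3) Θ^M(hg) = σ_g*(Θ^M(h)) + Θ^M(g), i.e. Θ^M : G → Ω¹(M) is a 1-cocycle for the G-module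 Ω¹(M). -/
/-!
Both sides of the multiplicativity identity are additive in the tangent vector `(X, Y, U)`,
so it splits into three identities, obtained by letting only `Y`, only `X` or only `U` be
nonzero. The `Y`-identity says that `Θ^G` is invariant under right translations, hence
determined by its restriction `μ := Θ^G(1, ·)` to the identity arrows; this is (2).
The `U`-identity is the cocycle condition (3). Given (2), the `X`-identity at `g = 1` is (1), since
`R_{h⁻¹} ∘ L_h` is conjugation by `h`, and conversely (1) at the point `gm`, applied to
`R_{g⁻¹*}X`, gives back the `X`-identity.
-/

/-- Unlike `mfderiv_comp_apply_of_eq`, the composite is any `F` agreeing pointwise with `g ∘ f`,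
so that it can be a lambda term such as `fun k => h * k * h⁻¹`. -/
theorem mfderiv_apply_mfderiv_of_comp_eq {𝕜 : Type*} [NontriviallyNormedField 𝕜]
    {E : Type*} [NormedAddCommGroup E] [NormedSpace 𝕜 E]
    {H : Type*} [TopologicalSpace H] {I : ModelWithCorners 𝕜 E H}
    {M : Type*} [TopologicalSpace M] [ChartedSpace H M]
    {E' : Type*} [NormedAddCommGroup E'] [NormedSpace 𝕜 E']
    {H' : Type*} [TopologicalSpace H'] {I' : ModelWithCorners 𝕜 E' H'}
    {M' : Type*} [TopologicalSpace M'] [ChartedSpace H' M']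
    {E'' : Type*} [NormedAddCommGroup E''] [NormedSpace 𝕜 E'']
    {H'' : Type*} [TopologicalSpace H''] {I'' : ModelWithCorners 𝕜 E'' H''}
    {M'' : Type*} [TopologicalSpace M''] [ChartedSpace H'' M'']
    {f : M → M'} {g : M' → M''} {F : M → M''} {x : M} {y : M'}
    (hg : MDifferentiableAt I' I'' g y) (hf : MDifferentiableAt I I' f x)
    (hxy : f x = y) (hF : ∀ z, g (f z) = F z) (v : TangentSpace I x) :
    mfderiv I' I'' g y (mfderiv I I' f x v) = mfderiv I I'' F x v := by
  obtain rfl : g ∘ f = F := funext hF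
  subst hxy
  exact (mfderiv_comp_apply _ hg hf v).symm

section ActionGroupoid

variable {E : Type*} [NormedAddCommGroup E] [NormedSpace ℝ E]
  {H : Type*} [TopologicalSpace H] {I : ModelWithCorners ℝ E H}
  {G : Type*} [TopologicalSpace G] [ChartedSpace H G] [Group G]
  {M : Type*} {σ : G → M → M} {ΘG : (g : G) → M → TangentSpace I g →ₗ[ℝ] ℝ}

theorem eq_apply_one_mfderiv_mul_inv_of_rightInvariant [ContMDiffMul I 1 G]
    (hR : ∀ (g h : G) (m : M) (Y : TangentSpace I h),
      ΘG (h * g) m (mfderiv I I (fun k => k * g) h Y) = ΘG h (σ g m) Y)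
    (g : G) (m : M) (X : TangentSpace I g) :
    ΘG g m X = ΘG 1 (σ g m) (mfderiv I I (fun k => k * g⁻¹) g X) := by
  have hX : mfderiv I I (fun k => k * g) 1 (mfderiv I I (fun k => k * g⁻¹) g X) = X := by
    rw [mfderiv_apply_mfderiv_of_comp_eq (F := id) mdifferentiableAt_mul_right
      mdifferentiableAt_mul_right (mul_inv_cancel g) (by simp), mfderiv_id]
    rfl
  have h1g := hR g 1 m (mfderiv I I (fun k => k * g⁻¹) g X)
  rw [hX] at h1g
  rw [← h1g, one_mul]

theorem rightInvariant_of_eq_apply_mfderiv_mul_inv [ContMDiffMul I 1 G]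
    (hσ_mul : ∀ g h m, σ (h * g) m = σ h (σ g m))
    {μ : M → TangentSpace I (1 : G) →ₗ[ℝ] ℝ}
    (hμ : ∀ (g : G) (m : M) (X : TangentSpace I g),
      ΘG g m X = μ (σ g m) (mfderiv I I (fun k => k * g⁻¹) g X))
    (g h : G) (m : M) (Y : TangentSpace I h) :
    ΘG (h * g) m (mfderiv I I (fun k => k * g) h Y) = ΘG h (σ g m) Y := by
  rw [hμ, hμ, hσ_mul, mfderiv_apply_mfderiv_of_comp_eq (F := fun k => k * h⁻¹)
    mdifferentiableAt_mul_right mdifferentiableAt_mul_right rfl (fun k => by group)]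

variable {E' : Type*} [NormedAddCommGroup E'] [NormedSpace ℝ E']
  {H' : Type*} [TopologicalSpace H'] {J : ModelWithCorners ℝ E' H'}
  [TopologicalSpace M] [ChartedSpace H' M]
  {ΘM : G → (m : M) → TangentSpace J m →ₗ[ℝ] ℝ}

theorem multiplicative_iff_components
    (hσ : MDifferentiable (I.prod J) J (fun p : G × M => σ p.1 p.2)) :
    (∀ (g h : G) (m : M) (X : TangentSpace I g) (Y : TangentSpace I h)
        (U : TangentSpace J m),
      ΘG (h * g) m
          (mfderiv I I (fun k => h * k) g X + mfderiv I I (fun k => k * g) h Y)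
        + ΘM (h * g) m U
      = ΘG h (σ g m) Y
        + ΘM h (σ g m) (mfderiv (I.prod J) J (fun p : G × M => σ p.1 p.2) (g, m) (X, U))
        + ΘG g m X + ΘM g m U)
    ↔
    (∀ (g h : G) (m : M) (Y : TangentSpace I h),
        ΘG (h * g) m (mfderiv I I (fun k => k * g) h Y) = ΘG h (σ g m) Y) ∧
      (∀ (g h : G) (m : M) (X : TangentSpace I g),
        ΘG (h * g) m (mfderiv I I (fun k => h * k) g X)
          = ΘM h (σ g m) (mfderiv I J (fun k => σ k m) g X) + ΘG g m X) ∧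
      (∀ (g h : G) (m : M) (U : TangentSpace J m),
        ΘM (h * g) m U
          = ΘM h (σ g m) (mfderiv J J (fun x => σ g x) m U) + ΘM g m U) := by
  have hsplit : ∀ (g : G) (m : M) (X : TangentSpace I g) (U : TangentSpace J m),
      mfderiv (I.prod J) J (fun p : G × M => σ p.1 p.2) (g, m) (X, U)
        = mfderiv I J (fun k => σ k m) g X + mfderiv J J (fun x => σ g x) m U :=
    fun g m X U => mfderiv_prod_eq_add_apply (hσ (g, m))
  simp only [hsplit, map_add]
  constructor
  · intro hmult
    refine ⟨fun g h m Y => ?_, fun g h m X => ?_, fun g h m U => ?_⟩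
    · simpa using hmult g h m 0 Y 0
    · simpa [add_comm] using hmult g h m X 0 0
    · simpa [add_comm] using hmult g h m 0 0 U
  · rintro ⟨hY, hX, hU⟩ g h m X Y U
    rw [hY, hX, hU]
    ring

theorem conj_sub_eq_of_mul_left [ContMDiffMul I 1 G] (hσ_one : ∀ m, σ 1 m = m)
    (hR : ∀ (g : G) (m : M) (X : TangentSpace I g),
      ΘG g m X = ΘG 1 (σ g m) (mfderiv I I (fun k => k * g⁻¹) g X))
    (hL : ∀ (g h : G) (m : M) (X : TangentSpace I g),
      ΘG (h * g) m (mfderiv I I (fun k => h * k) g X)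
        = ΘM h (σ g m) (mfderiv I J (fun k => σ k m) g X) + ΘG g m X)
    (h : G) (m : M) (x : TangentSpace I (1 : G)) :
    ΘG 1 (σ h m) (mfderiv I I (fun k => h * k * h⁻¹) 1 x) - ΘG 1 m x
      = ΘM h m (mfderiv I J (fun k => σ k m) 1 x) := by
  have hconj : mfderiv I I (fun k => k * h⁻¹) h (mfderiv I I (fun k => h * k) 1 x)
      = mfderiv I I (fun k => h * k * h⁻¹) 1 x :=
    mfderiv_apply_mfderiv_of_comp_eq mdifferentiableAt_mul_right mdifferentiableAt_mul_left
      (mul_one h) (fun _ => rfl) x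
  have hL1 : ΘG h m (mfderiv I I (fun k => h * k) 1 x)
      = ΘM h m (mfderiv I J (fun k => σ k m) 1 x) + ΘG 1 m x := by
    convert hL 1 h m x using 2
    · rw [mul_one]
    · rw [hσ_one]
  have hRh := hR h m (mfderiv I I (fun k => h * k) 1 x)
  rw [hconj] at hRh
  rw [← hRh, hL1, add_sub_cancel_right]

theorem mul_left_eq_of_conj_sub_eq [ContMDiffMul I 1 G]
    (hσ_mul : ∀ g h m, σ (h * g) m = σ h (σ g m))
    (hσ_orbit : ∀ m, MDifferentiableAt I J (fun k => σ k m) 1)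
    {μ : M → TangentSpace I (1 : G) →ₗ[ℝ] ℝ}
    (hμ : ∀ (g : G) (m : M) (X : TangentSpace I g),
      ΘG g m X = μ (σ g m) (mfderiv I I (fun k => k * g⁻¹) g X))
    (hAd : ∀ (h : G) (m : M) (x : TangentSpace I (1 : G)),
      μ (σ h m) (mfderiv I I (fun k => h * k * h⁻¹) 1 x) - μ m x
        = ΘM h m (mfderiv I J (fun k => σ k m) 1 x))
    (g h : G) (m : M) (X : TangentSpace I g) :
    ΘG (h * g) m (mfderiv I I (fun k => h * k) g X)
      = ΘM h (σ g m) (mfderiv I J (fun k => σ k m) g X) + ΘG g m X := by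
  have hconj : mfderiv I I (fun k => k * (h * g)⁻¹) (h * g) (mfderiv I I (fun k => h * k) g X)
      = mfderiv I I (fun k => h * k * h⁻¹) 1 (mfderiv I I (fun k => k * g⁻¹) g X) :=
    (mfderiv_apply_mfderiv_of_comp_eq (F := fun k => h * (k * g⁻¹) * h⁻¹)
        mdifferentiableAt_mul_right mdifferentiableAt_mul_left rfl (fun k => by group) X).trans
      (mfderiv_apply_mfderiv_of_comp_eq (g := fun k => h * k * h⁻¹)
        (mdifferentiableAt_mul_right.comp 1 mdifferentiableAt_mul_left)
        mdifferentiableAt_mul_right (mul_inv_cancel g) (fun _ => rfl) X).symm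
  have horbit : mfderiv I J (fun k => σ k (σ g m)) 1 (mfderiv I I (fun k => k * g⁻¹) g X)
      = mfderiv I J (fun k => σ k m) g X :=
    mfderiv_apply_mfderiv_of_comp_eq (hσ_orbit (σ g m)) mdifferentiableAt_mul_right
      (mul_inv_cancel g) (fun k => by rw [← hσ_mul, inv_mul_cancel_right]) X
  have hAdX := hAd h (σ g m) (mfderiv I I (fun k => k * g⁻¹) g X)
  rw [horbit, ← hσ_mul] at hAdX
  rw [hμ (h * g), hconj, hμ g, ← hAdX, sub_add_cancel]

end ActionGroupoid

theorem multiplicative_one_forms_action_groupoid_general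
    {E : Type*} [NormedAddCommGroup E] [NormedSpace ℝ E]
    {H : Type*} [TopologicalSpace H] (I : ModelWithCorners ℝ E H)
    {E' : Type*} [NormedAddCommGroup E'] [NormedSpace ℝ E']
    {H' : Type*} [TopologicalSpace H'] (J : ModelWithCorners ℝ E' H')
    (G : Type*) [TopologicalSpace G] [ChartedSpace H G] [Group G] [LieGroup I (⊤ : ℕ∞) G]
    (M : Type*) [TopologicalSpace M] [ChartedSpace H' M]
    -- the smooth action
    (σ : G → M → M)
    (hσ_smooth : ContMDiff (I.prod J) J (⊤ : ℕ∞) (fun p : G × M => σ p.1 p.2))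
    (hσ_one : ∀ m, σ 1 m = m)
    (hσ_mul : ∀ g h m, σ (h * g) m = σ h (σ g m))
    -- the 1-form `Θ = (Θ^G, Θ^M)` on the action groupoid `G ⋉ M`
    (ΘG : ∀ (g : G) (m : M), TangentSpace I g →ₗ[ℝ] ℝ)
    (ΘM : ∀ (g : G) (m : M), TangentSpace J m →ₗ[ℝ] ℝ) :
    -- multiplicativity with respect to the tangent groupoid multiplication:
    -- `Θ((Y_h, V)·(X_g, U)) = Θ(Y_h, V) + Θ(X_g, U)` where `V = σ_*(X_g, U)` and
    -- `(Y_h, V)·(X_g, U) = (L_{h*}X_g + R_{g*}Y_h, U)` at `(hg, m)`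
    (∀ (g h : G) (m : M) (X : TangentSpace I g) (Y : TangentSpace I h)
        (U : TangentSpace J m),
      ΘG (h * g) m
          (mfderiv I I (fun k => h * k) g X + mfderiv I I (fun k => k * g) h Y)
        + ΘM (h * g) m U
      = ΘG h (σ g m) Y
        + ΘM h (σ g m) (mfderiv (I.prod J) J (fun p : G × M => σ p.1 p.2) (g, m) (X, U))
        + ΘG g m X + ΘM g m U)
    ↔
    (∃ μ : (m : M) → (TangentSpace I (1 : G) →ₗ[ℝ] ℝ),
      -- (1) `Ad_h* μ_{hm} - μ_m = ρ* Θ^M_{(h,m)}`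
      (∀ (h : G) (m : M) (x : TangentSpace I (1 : G)),
        μ (σ h m) (mfderiv I I (fun k => h * k * h⁻¹) 1 x) - μ m x
          = ΘM h m (mfderiv I J (fun k => σ k m) 1 x)) ∧
      -- (2) `Θ^G_{(g,m)} = R_{g⁻¹}* μ_{gm}`
      (∀ (g : G) (m : M) (X : TangentSpace I g),
        ΘG g m X = μ (σ g m) (mfderiv I I (fun k => k * g⁻¹) g X)) ∧
      -- (3) `Θ^M(hg) = σ_g*(Θ^M(h)) + Θ^M(g)`
      (∀ (g h : G) (m : M) (U : TangentSpace J m),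
        ΘM (h * g) m U
          = ΘM h (σ g m) (mfderiv J J (fun x => σ g x) m U) + ΘM g m U)) := by
  have hσ : MDifferentiable (I.prod J) J (fun p : G × M => σ p.1 p.2) :=
    hσ_smooth.mdifferentiable (by simp)
  have horbit : ∀ m, MDifferentiableAt I J (fun k => σ k m) 1 := fun m =>
    (hσ (1, m)).comp 1 (mdifferentiableAt_id.prodMk mdifferentiableAt_const)
  rw [multiplicative_iff_components hσ]
  constructor
  · rintro ⟨hR, hL, hC⟩
    have hμ := eq_apply_one_mfderiv_mul_inv_of_rightInvariant hR
    exact ⟨fun m => ΘG 1 m, conj_sub_eq_of_mul_left hσ_one hμ hL, hμ, hC⟩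
  · rintro ⟨μ, hAd, hμ, hC⟩
    exact ⟨rightInvariant_of_eq_apply_mfderiv_mul_inv hσ_mul hμ,
      mul_left_eq_of_conj_sub_eq hσ_mul horbit hμ hAd, hC⟩

theorem multiplicative_one_forms_action_groupoid
    {E : Type*} [NormedAddCommGroup E] [NormedSpace ℝ E]
    {H : Type*} [TopologicalSpace H] (I : ModelWithCorners ℝ E H)
    {E' : Type*} [NormedAddCommGroup E'] [NormedSpace ℝ E']
    {H' : Type*} [TopologicalSpace H'] (J : ModelWithCorners ℝ E' H')
    (G : Type*) [TopologicalSpace G] [ChartedSpace H G] [Group G] [LieGroup I (⊤ : ℕ∞) G]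
    (M : Type*) [TopologicalSpace M] [ChartedSpace H' M] [IsManifold J (⊤ : ℕ∞) M]
    -- the smooth action
    (σ : G → M → M)
    (hσ_smooth : ContMDiff (I.prod J) J (⊤ : ℕ∞) (fun p : G × M => σ p.1 p.2))
    (hσ_one : ∀ m, σ 1 m = m)
    (hσ_mul : ∀ g h m, σ (h * g) m = σ h (σ g m))
    -- the 1-form `Θ = (Θ^G, Θ^M)` on the action groupoid `G ⋉ M`
    (ΘG : ∀ (g : G) (m : M), TangentSpace I g →ₗ[ℝ] ℝ)
    (ΘM : ∀ (g : G) (m : M), TangentSpace J m →ₗ[ℝ] ℝ) :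
    -- multiplicativity with respect to the tangent groupoid multiplication:
    -- `Θ((Y_h, V)·(X_g, U)) = Θ(Y_h, V) + Θ(X_g, U)` where `V = σ_*(X_g, U)` and
    -- `(Y_h, V)·(X_g, U) = (L_{h*}X_g + R_{g*}Y_h, U)` at `(hg, m)`
    (∀ (g h : G) (m : M) (X : TangentSpace I g) (Y : TangentSpace I h)
        (U : TangentSpace J m),
      ΘG (h * g) m
          (mfderiv I I (fun k => h * k) g X + mfderiv I I (fun k => k * g) h Y)
        + ΘM (h * g) m U
      = ΘG h (σ g m) Y
        + ΘM h (σ g m) (mfderiv (I.prod J) J (fun p : G × M => σ p.1 p.2) (g, m) (X, U))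
        + ΘG g m X + ΘM g m U)
    ↔
    (∃ μ : (m : M) → (TangentSpace I (1 : G) →ₗ[ℝ] ℝ),
      -- (1) `Ad_h* μ_{hm} - μ_m = ρ* Θ^M_{(h,m)}`
      (∀ (h : G) (m : M) (x : TangentSpace I (1 : G)),
        μ (σ h m) (mfderiv I I (fun k => h * k * h⁻¹) 1 x) - μ m x
          = ΘM h m (mfderiv I J (fun k => σ k m) 1 x)) ∧
      -- (2) `Θ^G_{(g,m)} = R_{g⁻¹}* μ_{gm}`
      (∀ (g : G) (m : M) (X : TangentSpace I g),
        ΘG g m X = μ (σ g m) (mfderiv I I (fun k => k * g⁻¹) g X)) ∧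
      -- (3) `Θ^M(hg) = σ_g*(Θ^M(h)) + Θ^M(g)`
      (∀ (g h : G) (m : M) (U : TangentSpace J m),
        ΘM (h * g) m U
          = ΘM h (σ g m) (mfderiv J J (fun x => σ g x) m U) + ΘM g m U)) :=
  multiplicative_one_forms_action_groupoid_general I J G M σ hσ_smooth hσ_one hσ_mul ΘG ΘM
end

section
/- Let G be a Lie group with Lie algebra 𝔩. The map Θ ↦ θ := Θ|_e establishes a linear isomorphism between the space Ω¹_mult(G) of multiplicative 1-forms on G and the space (𝔩*)^G of Ad*-invariant elements of 𝔩*; under this isomorphism, Θ_g = R_g* θ = L_g* θ for every g ∈ G (i.e. every multiplicative 1-form is bi-invariant with invariant value θ, and conversely every Ad*-invariant θ ∈ 𝔩* extends uniquely to a multiplicative 1-form). -/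
/-!
Writing `L_g`, `R_g` for the translations, put `Y = 0` or `X = 0` in the multiplicativity
identity with `g = 1` or `h = 1`: this gives `Θ_g ∘ (R_g)_* = Θ_1 = Θ_g ∘ (L_g)_*` on
`T_1G`, so `Θ` is bi-invariant. Comparing the two expressions for `Θ_g` gives
`Θ_1 ∘ (R_{g⁻¹} L_g)_* = Θ_1`, which is `Ad*`-invariance. Conversely, the `(L_g)_*Y` term
of the identity is handled by left invariance and the `(R_h)_*X` term by right
invariance. A right-invariant form is determined by its value at `1`, which gives
uniqueness, and the right-invariant extension of an `Ad*`-invariant `θ` is left-invariant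
as well, hence multiplicative.
-/

section Manifold

variable {𝕜 : Type*} [NontriviallyNormedField 𝕜]
  {E : Type*} [NormedAddCommGroup E] [NormedSpace 𝕜 E]
  {H : Type*} [TopologicalSpace H] {I : ModelWithCorners 𝕜 E H}
  {M : Type*} [TopologicalSpace M] [ChartedSpace H M]
  {E' : Type*} [NormedAddCommGroup E'] [NormedSpace 𝕜 E']
  {H' : Type*} [TopologicalSpace H'] {I' : ModelWithCorners 𝕜 E' H'}
  {M' : Type*} [TopologicalSpace M'] [ChartedSpace H' M']
  {E'' : Type*} [NormedAddCommGroup E''] [NormedSpace 𝕜 E'']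
  {H'' : Type*} [TopologicalSpace H''] {I'' : ModelWithCorners 𝕜 E'' H''}
  {M'' : Type*} [TopologicalSpace M''] [ChartedSpace H'' M'']

/-- The base point `y` and the composite `h` are separate arguments so that callers never have
to rewrite base points inside the dependent types `TangentSpace I x`. -/
theorem mfderiv_apply_mfderiv_of_comp_eq_s14 {f : M' → M''} {g : M → M'} {h : M → M''}
    {x : M} {y : M'} (hf : MDifferentiableAt I' I'' f y) (hg : MDifferentiableAt I I' g x)
    (hy : g x = y) (hfg : ∀ k, f (g k) = h k) (v : TangentSpace I x) :
    mfderiv I' I'' f y (mfderiv I I' g x v) = mfderiv I I'' h x v := by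
  obtain rfl : f ∘ g = h := funext hfg
  exact (mfderiv_comp_apply_of_eq x hf hg hy v).symm

theorem mfderiv_apply_of_forall_eq_self {f : M → M} (hf : ∀ k, f k = k) (x : M)
    (v : TangentSpace I x) : mfderiv I I f x v = v := by
  obtain rfl : id = f := funext fun k => (hf k).symm
  rw [mfderiv_id]
  rfl

end Manifold

section LieGroup

variable {𝕜 : Type*} [NontriviallyNormedField 𝕜]
  {E : Type*} [NormedAddCommGroup E] [NormedSpace 𝕜 E]
  {H : Type*} [TopologicalSpace H] {I : ModelWithCorners 𝕜 E H}
  {G : Type*} [TopologicalSpace G] [ChartedSpace H G] [Group G]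

variable (I) in
def IsAdInvariant (θ : TangentSpace I (1 : G) →ₗ[𝕜] 𝕜) : Prop :=
  ∀ (g : G) (x : TangentSpace I (1 : G)), θ (mfderiv I I (fun k => g * k * g⁻¹) 1 x) = θ x

def IsLeftInvariantForm (Θ : (g : G) → TangentSpace I g →ₗ[𝕜] 𝕜) : Prop :=
  ∀ (g : G) (x : TangentSpace I (1 : G)), Θ g (mfderiv I I (g * ·) 1 x) = Θ 1 x

def IsRightInvariantForm (Θ : (g : G) → TangentSpace I g →ₗ[𝕜] 𝕜) : Prop :=
  ∀ (g : G) (x : TangentSpace I (1 : G)), Θ g (mfderiv I I (· * g) 1 x) = Θ 1 x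

def IsMultiplicativeForm (Θ : (g : G) → TangentSpace I g →ₗ[𝕜] 𝕜) : Prop :=
  ∀ (g h : G) (X : TangentSpace I g) (Y : TangentSpace I h),
    Θ (g * h) (mfderiv I I (g * ·) h Y + mfderiv I I (· * h) g X) = Θ h Y + Θ g X

variable (I) in
noncomputable def rightInvariantExtension (θ : TangentSpace I (1 : G) →ₗ[𝕜] 𝕜) (g : G) :
    TangentSpace I g →ₗ[𝕜] 𝕜 :=
  θ ∘ₗ (mfderiv I I (· * g⁻¹) g).toLinearMap

variable {Θ : (g : G) → TangentSpace I g →ₗ[𝕜] 𝕜} {θ : TangentSpace I (1 : G) →ₗ[𝕜] 𝕜}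

theorem IsMultiplicativeForm.isRightInvariantForm (hΘ : IsMultiplicativeForm Θ) :
    IsRightInvariantForm Θ := fun g x => by
  have h := hΘ 1 g x 0
  rw [map_zero, zero_add, map_zero, zero_add, one_mul] at h
  exact h

theorem IsMultiplicativeForm.isLeftInvariantForm (hΘ : IsMultiplicativeForm Θ) :
    IsLeftInvariantForm Θ := fun g x => by
  have h := hΘ g 1 0 x
  rw [map_zero, add_zero, map_zero, add_zero, mul_one] at h
  exact h

theorem rightInvariantExtension_one : rightInvariantExtension I θ 1 = θ :=
  LinearMap.ext fun x => congrArg θ <|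
    mfderiv_apply_of_forall_eq_self (fun k => by rw [inv_one, mul_one]) 1 x

variable [ContMDiffMul I 1 G]

theorem mfderiv_mul_left_apply_mfderiv_mul_left (g h : G) (y : TangentSpace I (1 : G)) :
    mfderiv I I (g * ·) h (mfderiv I I (h * ·) 1 y) = mfderiv I I (g * h * ·) 1 y :=
  mfderiv_apply_mfderiv_of_comp_eq_s14 mdifferentiableAt_mul_left mdifferentiableAt_mul_left
    (mul_one h) (fun k => (mul_assoc g h k).symm) y

theorem mfderiv_mul_right_apply_mfderiv_mul_right (g h : G) (x : TangentSpace I (1 : G)) :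
    mfderiv I I (· * h) g (mfderiv I I (· * g) 1 x) = mfderiv I I (· * (g * h)) 1 x :=
  mfderiv_apply_mfderiv_of_comp_eq_s14 mdifferentiableAt_mul_right mdifferentiableAt_mul_right
    (one_mul g) (fun k => mul_assoc k g h) x

theorem mfderiv_mul_left_apply_mfderiv_mul_left_inv (h : G) (Y : TangentSpace I h) :
    mfderiv I I (h * ·) 1 (mfderiv I I (h⁻¹ * ·) h Y) = Y :=
  (mfderiv_apply_mfderiv_of_comp_eq_s14 mdifferentiableAt_mul_left mdifferentiableAt_mul_left
    (inv_mul_cancel h) (fun _ => rfl) Y).trans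
    (mfderiv_apply_of_forall_eq_self (mul_inv_cancel_left h) h Y)

theorem mfderiv_mul_right_apply_mfderiv_mul_right_inv (g : G) (X : TangentSpace I g) :
    mfderiv I I (· * g) 1 (mfderiv I I (· * g⁻¹) g X) = X :=
  (mfderiv_apply_mfderiv_of_comp_eq_s14 mdifferentiableAt_mul_right mdifferentiableAt_mul_right
    (mul_inv_cancel g) (fun _ => rfl) X).trans
    (mfderiv_apply_of_forall_eq_self (inv_mul_cancel_right · g) g X)

theorem mfderiv_mul_right_inv_apply_mfderiv_mul_right (g : G) (x : TangentSpace I (1 : G)) :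
    mfderiv I I (· * g⁻¹) g (mfderiv I I (· * g) 1 x) = x :=
  (mfderiv_apply_mfderiv_of_comp_eq_s14 mdifferentiableAt_mul_right mdifferentiableAt_mul_right
    (one_mul g) (fun _ => rfl) x).trans
    (mfderiv_apply_of_forall_eq_self (mul_inv_cancel_right · g) 1 x)

theorem mfderiv_mul_right_inv_apply_mfderiv_mul_left (g : G) (x : TangentSpace I (1 : G)) :
    mfderiv I I (· * g⁻¹) g (mfderiv I I (g * ·) 1 x) =
      mfderiv I I (fun k => g * k * g⁻¹) 1 x :=
  mfderiv_apply_mfderiv_of_comp_eq_s14 mdifferentiableAt_mul_right mdifferentiableAt_mul_left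
    (mul_one g) (fun _ => rfl) x

theorem IsLeftInvariantForm.apply_mfderiv_mul_left (hΘ : IsLeftInvariantForm Θ) (g h : G)
    (Y : TangentSpace I h) : Θ (g * h) (mfderiv I I (g * ·) h Y) = Θ h Y := by
  set y := mfderiv I I (h⁻¹ * ·) h Y
  have hY : mfderiv I I (h * ·) 1 y = Y := mfderiv_mul_left_apply_mfderiv_mul_left_inv h Y
  calc Θ (g * h) (mfderiv I I (g * ·) h Y)
      = Θ (g * h) (mfderiv I I (g * ·) h (mfderiv I I (h * ·) 1 y)) := by rw [hY]
    _ = Θ (g * h) (mfderiv I I (g * h * ·) 1 y) :=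
      congrArg _ (mfderiv_mul_left_apply_mfderiv_mul_left g h y)
    _ = Θ h (mfderiv I I (h * ·) 1 y) := (hΘ _ y).trans (hΘ h y).symm
    _ = Θ h Y := by rw [hY]

theorem IsRightInvariantForm.apply_mfderiv_mul_right (hΘ : IsRightInvariantForm Θ) (g h : G)
    (X : TangentSpace I g) : Θ (g * h) (mfderiv I I (· * h) g X) = Θ g X := by
  set x := mfderiv I I (· * g⁻¹) g X
  have hX : mfderiv I I (· * g) 1 x = X := mfderiv_mul_right_apply_mfderiv_mul_right_inv g X
  calc Θ (g * h) (mfderiv I I (· * h) g X)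
      = Θ (g * h) (mfderiv I I (· * h) g (mfderiv I I (· * g) 1 x)) := by rw [hX]
    _ = Θ (g * h) (mfderiv I I (· * (g * h)) 1 x) :=
      congrArg _ (mfderiv_mul_right_apply_mfderiv_mul_right g h x)
    _ = Θ g (mfderiv I I (· * g) 1 x) := (hΘ _ x).trans (hΘ g x).symm
    _ = Θ g X := by rw [hX]

theorem IsMultiplicativeForm.of_isRightInvariantForm_of_isLeftInvariantForm
    (hR : IsRightInvariantForm Θ) (hL : IsLeftInvariantForm Θ) : IsMultiplicativeForm Θ := by
  intro g h X Y
  rw [map_add, hL.apply_mfderiv_mul_left, hR.apply_mfderiv_mul_right]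

theorem IsMultiplicativeForm.isAdInvariant (hΘ : IsMultiplicativeForm Θ) :
    IsAdInvariant I (Θ 1) := fun g x => by
  have h := hΘ g g⁻¹ (mfderiv I I (g * ·) 1 x) 0
  rw [map_zero, zero_add, map_zero, zero_add, mul_inv_cancel] at h
  calc Θ 1 (mfderiv I I (fun k => g * k * g⁻¹) 1 x)
      = Θ 1 (mfderiv I I (· * g⁻¹) g (mfderiv I I (g * ·) 1 x)) :=
      congrArg _ (mfderiv_mul_right_inv_apply_mfderiv_mul_left g x).symm
    _ = Θ g (mfderiv I I (g * ·) 1 x) := h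
    _ = Θ 1 x := hΘ.isLeftInvariantForm g x

theorem isRightInvariantForm_rightInvariantExtension :
    IsRightInvariantForm (rightInvariantExtension I θ) := fun g x =>
  (congrArg θ (mfderiv_mul_right_inv_apply_mfderiv_mul_right g x)).trans
    (LinearMap.congr_fun rightInvariantExtension_one x).symm

theorem IsAdInvariant.isLeftInvariantForm_rightInvariantExtension (hθ : IsAdInvariant I θ) :
    IsLeftInvariantForm (rightInvariantExtension I θ) := fun g x =>
  (congrArg θ (mfderiv_mul_right_inv_apply_mfderiv_mul_left g x)).trans
    ((hθ g x).trans (LinearMap.congr_fun rightInvariantExtension_one x).symm)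

theorem IsRightInvariantForm.eq_rightInvariantExtension (hΘ : IsRightInvariantForm Θ) :
    Θ = rightInvariantExtension I (Θ 1) :=
  funext fun g => LinearMap.ext fun X =>
    (congrArg (Θ g) (mfderiv_mul_right_apply_mfderiv_mul_right_inv g X)).symm.trans (hΘ g _)

theorem isMultiplicativeForm_iff :
    IsMultiplicativeForm Θ ↔
      IsAdInvariant I (Θ 1) ∧ IsRightInvariantForm Θ ∧ IsLeftInvariantForm Θ :=
  ⟨fun hΘ => ⟨hΘ.isAdInvariant, hΘ.isRightInvariantForm, hΘ.isLeftInvariantForm⟩,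
    fun ⟨_, hR, hL⟩ => .of_isRightInvariantForm_of_isLeftInvariantForm hR hL⟩

theorem IsAdInvariant.existsUnique_isMultiplicativeForm (hθ : IsAdInvariant I θ) :
    ∃! Θ : (g : G) → TangentSpace I g →ₗ[𝕜] 𝕜, IsMultiplicativeForm Θ ∧ Θ 1 = θ := by
  refine ⟨rightInvariantExtension I θ, ⟨?_, rightInvariantExtension_one⟩, ?_⟩
  · exact .of_isRightInvariantForm_of_isLeftInvariantForm
      isRightInvariantForm_rightInvariantExtension
      hθ.isLeftInvariantForm_rightInvariantExtension
  · rintro Θ ⟨hΘ, rfl⟩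
    exact hΘ.isRightInvariantForm.eq_rightInvariantExtension

end LieGroup

theorem multiplicative_one_forms_lie_group
    {E : Type*} [NormedAddCommGroup E] [NormedSpace ℝ E]
    {H : Type*} [TopologicalSpace H] (I : ModelWithCorners ℝ E H)
    (G : Type*) [TopologicalSpace G] [ChartedSpace H G] [Group G] [LieGroup I (⊤ : ℕ∞) G] :
    -- a 1-form `Θ` is multiplicative iff its value `θ = Θ 1` at the identity is
    -- `Ad*`-invariant and `Θ` is the bi-invariant extension of `θ`
    (∀ Θ : (g : G) → (TangentSpace I g →ₗ[ℝ] ℝ),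
      (∀ (g h : G) (X : TangentSpace I g) (Y : TangentSpace I h),
          Θ (g * h) (mfderiv I I (fun k => g * k) h Y
              + mfderiv I I (fun k => k * h) g X)
            = Θ h Y + Θ g X)
        ↔
      ((∀ (g : G) (x : TangentSpace I (1 : G)),
          Θ 1 (mfderiv I I (fun k => g * k * g⁻¹) 1 x) = Θ 1 x) ∧
        (∀ (g : G) (x : TangentSpace I (1 : G)),
          Θ g (mfderiv I I (fun k => k * g) 1 x) = Θ 1 x) ∧
        (∀ (g : G) (x : TangentSpace I (1 : G)),
          Θ g (mfderiv I I (fun k => g * k) 1 x) = Θ 1 x))) ∧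
    -- conversely, every `Ad*`-invariant `θ ∈ 𝔩*` extends uniquely to a multiplicative
    -- 1-form
    (∀ θ : TangentSpace I (1 : G) →ₗ[ℝ] ℝ,
      (∀ (g : G) (x : TangentSpace I (1 : G)),
          θ (mfderiv I I (fun k => g * k * g⁻¹) 1 x) = θ x) →
      ∃! Θ : (g : G) → (TangentSpace I g →ₗ[ℝ] ℝ),
        (∀ (g h : G) (X : TangentSpace I g) (Y : TangentSpace I h),
          Θ (g * h) (mfderiv I I (fun k => g * k) h Y
              + mfderiv I I (fun k => k * h) g X)
            = Θ h Y + Θ g X) ∧ Θ 1 = θ) := by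
  exact ⟨fun _ => isMultiplicativeForm_iff,
    fun _ hθ => IsAdInvariant.existsUnique_isMultiplicativeForm hθ⟩
end
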